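/- arXiv:1005.1260 — 2 statements merged into one kernel-verified Lean document; each statement's English description precedes it below -/
import Mathlib

section
/- Let q > 2 be real and let B_q = √2 · (Γ((q+1)/2)/√π)^{1/q} be the best constant in the Khintchine inequality. Then 2^{2/q} < 1 + 1/B_q², equivalently 2^{2/q} < 1 + (1/2)·(√π/Γ((q+1)/2))^{2/q}. -/
/-!
With `t = q / 2` the claim reduces to `Γ(t + 1/2) ≤ √π (t/2)^t` for `t ≥ 1`, which gives
`1 / B_q² ≥ 2 / q`, together with Bernoulli's `2^(2/q) < 1 + 2/q`. The Gamma bound is checked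
on `[1, 2]` by log-convexity of `Γ` between the nodes `3/2, 2, 5/2` and the tangent lines of
`t log t`, which leaves the numerical facts `8 ≤ eπ`, `64 ≤ 27π` and `4 ≤ 3√e`. It passes
from `t` to `t + 1` through `Γ(t + 3/2) = (t + 1/2) Γ(t + 1/2)` and Bernoulli's
`(1 + 1/t)^t ≥ 2`.
-/

open Real Set

lemma three_mul_log_two_le_log_pi_add_one : 3 * log 2 ≤ log π + 1 := by
  have h : (2 : ℝ) ^ 3 ≤ π * exp 1 := by nlinarith [pi_gt_three, exp_one_gt_d9]
  simpa [log_pow, log_mul pi_pos.ne' (exp_pos 1).ne'] using log_le_log (by positivity) h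

lemma six_mul_log_two_le_log_pi_add_three_mul_log_three :
    6 * log 2 ≤ log π + 3 * log 3 := by
  have h : (2 : ℝ) ^ 6 ≤ π * 3 ^ 3 := by nlinarith [pi_gt_three]
  simpa [log_pow, log_mul pi_pos.ne'] using log_le_log (by positivity) h

lemma two_mul_log_two_le_log_three_add_half : 2 * log 2 ≤ log 3 + 1 / 2 := by
  have h : (2 : ℝ) ^ 2 ≤ 3 * exp (1 / 2) := by nlinarith [add_one_le_exp (1 / 2 : ℝ)]
  simpa [log_pow, log_mul] using log_le_log (by positivity) h

lemma mul_log_add_sub_le_mul_log {t c : ℝ} (ht : 0 < t) (hc : 0 < c) :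
    t * log c + (t - c) ≤ t * log t := by
  have h := one_sub_inv_le_log_of_pos (div_pos ht hc)
  rw [log_div ht.ne' hc.ne', inv_div] at h
  have := mul_le_mul_of_nonneg_left h ht.le
  rw [mul_sub, mul_one, mul_div_cancel₀ _ ht.ne'] at this
  linarith

lemma log_Gamma_mul_add_mul_le {x y a b : ℝ} (hx : 0 < x) (hy : 0 < y) (ha : 0 ≤ a)
    (hb : 0 ≤ b) (hab : a + b = 1) :
    log (Gamma (a * x + b * y)) ≤ a * log (Gamma x) + b * log (Gamma y) :=
  convexOn_log_Gamma.2 hx hy ha hb hab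

lemma log_Gamma_three_halves : log (Gamma (3 / 2)) = log π / 2 - log 2 := by
  rw [show (3 / 2 : ℝ) = 1 / 2 + 1 by norm_num, Gamma_add_one (by norm_num), Gamma_one_half_eq,
    log_mul (by norm_num) (by positivity), log_sqrt pi_pos.le, one_div, log_inv]
  ring

lemma log_Gamma_five_halves : log (Gamma (5 / 2)) = log π / 2 + log 3 - 2 * log 2 := by
  rw [show (5 / 2 : ℝ) = 3 / 2 + 1 by norm_num, Gamma_add_one (by norm_num),
    log_mul (by norm_num) (Gamma_pos_of_pos (by norm_num)).ne', log_Gamma_three_halves,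
    log_div (by norm_num) (by norm_num)]
  ring

lemma log_Gamma_add_half_le_of_le_three_halves {t : ℝ} (h1 : 1 ≤ t) (h2 : t ≤ 3 / 2) :
    log (Gamma (t + 1 / 2)) ≤ log π / 2 + t * (log t - log 2) := by
  have hΓ := log_Gamma_mul_add_mul_le (x := 3 / 2) (y := 2) (a := 3 - 2 * t) (b := 2 * t - 2)
    (by norm_num) (by norm_num) (by linarith) (by linarith) (by ring)
  rw [show (3 - 2 * t) * (3 / 2) + (2 * t - 2) * 2 = t + 1 / 2 by ring, log_Gamma_three_halves,
    Gamma_two, log_one] at hΓ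
  have htan := mul_log_add_sub_le_mul_log (t := t) (by linarith) one_pos
  rw [log_one] at htan
  linarith [mul_nonneg (sub_nonneg.2 h1) (sub_nonneg.2 three_mul_log_two_le_log_pi_add_one)]

lemma log_Gamma_add_half_le_of_three_halves_le {t : ℝ} (h1 : 3 / 2 ≤ t) (h2 : t ≤ 2) :
    log (Gamma (t + 1 / 2)) ≤ log π / 2 + t * (log t - log 2) := by
  have hΓ := log_Gamma_mul_add_mul_le (x := 2) (y := 5 / 2) (a := 4 - 2 * t) (b := 2 * t - 3)
    (by norm_num) (by norm_num) (by linarith) (by linarith) (by ring)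
  rw [show (4 - 2 * t) * 2 + (2 * t - 3) * (5 / 2) = t + 1 / 2 by ring, log_Gamma_five_halves,
    Gamma_two, log_one] at hΓ
  have htan := mul_log_add_sub_le_mul_log (t := t) (by linarith) (by norm_num : (0 : ℝ) < 3 / 2)
  rw [log_div (by norm_num) (by norm_num)] at htan
  linarith [mul_nonneg (sub_nonneg.2 h2)
      (sub_nonneg.2 six_mul_log_two_le_log_pi_add_three_mul_log_three),
    mul_nonneg (sub_nonneg.2 h1) (sub_nonneg.2 two_mul_log_two_le_log_three_add_half)]

lemma Gamma_add_half_le_of_mem_Icc {t : ℝ} (h1 : 1 ≤ t) (h2 : t ≤ 2) :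
    Gamma (t + 1 / 2) ≤ √π * (t / 2) ^ t := by
  have ht : 0 < t := by linarith
  rw [← log_le_log_iff (Gamma_pos_of_pos (by positivity)) (by positivity),
    log_mul (by positivity) (by positivity), log_sqrt pi_pos.le, log_rpow (by positivity),
    log_div ht.ne' two_ne_zero]
  rcases le_total t (3 / 2) with h | h
  · exact log_Gamma_add_half_le_of_le_three_halves h1 h
  · exact log_Gamma_add_half_le_of_three_halves_le h h2

lemma two_le_one_add_inv_rpow_self {t : ℝ} (ht : 1 ≤ t) : 2 ≤ (1 + t⁻¹) ^ t := by
  have ht0 : 0 < t := by linarith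
  have h := one_add_mul_self_le_rpow_one_add (s := t⁻¹) (by linarith [inv_pos.2 ht0]) ht
  rwa [mul_inv_cancel₀ ht0.ne', one_add_one_eq_two] at h

lemma Gamma_add_one_add_half_le {t : ℝ} (ht : 1 ≤ t)
    (h : Gamma (t + 1 / 2) ≤ √π * (t / 2) ^ t) :
    Gamma (t + 1 + 1 / 2) ≤ √π * ((t + 1) / 2) ^ (t + 1) := by
  have ht0 : 0 < t := by linarith
  have hsplit : ((t + 1) / 2) ^ t = (t / 2) ^ t * (1 + t⁻¹) ^ t := by
    rw [← mul_rpow (by positivity) (by positivity)]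
    congr 1
    field_simp
  calc Gamma (t + 1 + 1 / 2) = (t + 1 / 2) * Gamma (t + 1 / 2) := by
        rw [add_right_comm, Gamma_add_one (by positivity)]
    _ ≤ (t + 1) * (√π * (t / 2) ^ t) := by gcongr; linarith
    _ = (t + 1) / 2 * 2 * (√π * (t / 2) ^ t) := by ring
    _ ≤ (t + 1) / 2 * (1 + t⁻¹) ^ t * (√π * (t / 2) ^ t) := by
        gcongr; exact two_le_one_add_inv_rpow_self ht
    _ = √π * ((t + 1) / 2) ^ (t + 1) := by
        rw [rpow_add_one (by positivity), hsplit]; ring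

theorem Gamma_add_half_le {t : ℝ} (ht : 1 ≤ t) : Gamma (t + 1 / 2) ≤ √π * (t / 2) ^ t := by
  suffices ∀ n : ℕ, ∀ t : ℝ, 1 ≤ t → t ≤ n + 2 → Gamma (t + 1 / 2) ≤ √π * (t / 2) ^ t by
    obtain ⟨n, hn⟩ := exists_nat_ge t
    exact this n t ht (by linarith)
  intro n
  induction n with
  | zero => exact fun t h1 h2 ↦ Gamma_add_half_le_of_mem_Icc h1 (by simpa using h2)
  | succ n ih =>
    intro t h1 h2
    rcases le_total t 2 with h | h
    · exact Gamma_add_half_le_of_mem_Icc h1 h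
    · have h2' : t - 1 ≤ n + 2 := by push_cast at h2; linarith
      have h' := Gamma_add_one_add_half_le (by linarith) (ih (t - 1) (by linarith) h2')
      rwa [sub_add_cancel] at h'

lemma Gamma_div_sqrt_pi_rpow_le {q : ℝ} (hq : 2 ≤ q) :
    (Gamma ((q + 1) / 2) / √π) ^ (2 / q) ≤ q / 4 := by
  have h := Gamma_add_half_le (t := q / 2) (by linarith)
  rw [← add_div, div_div, show (2 : ℝ) * 2 = 4 by norm_num,
    ← div_le_iff₀' (by positivity)] at h
  have hG : 0 ≤ Gamma ((q + 1) / 2) / √π :=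
    div_nonneg (Gamma_pos_of_pos (by linarith : (0 : ℝ) < (q + 1) / 2)).le (sqrt_nonneg π)
  rwa [← inv_div q 2, rpow_inv_le_iff_of_pos hG (by linarith : (0 : ℝ) ≤ q / 4)
    (by linarith : (0 : ℝ) < q / 2)]

lemma two_rpow_lt_one_add {x : ℝ} (h0 : 0 < x) (h1 : x < 1) : (2 : ℝ) ^ x < 1 + x := by
  simpa [one_add_one_eq_two] using
    rpow_one_add_lt_one_add_mul_self (s := 1) (by norm_num) one_ne_zero h0 h1

theorem stmt3 (q : ℝ) (hq : 2 < q)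
    (Bq : ℝ) (hBq : Bq = Real.sqrt 2 * (Real.Gamma ((q + 1) / 2) / Real.sqrt Real.pi) ^ (1 / q)) :
    (2 : ℝ) ^ (2 / q) < 1 + 1 / Bq ^ 2 ∧
    (2 : ℝ) ^ (2 / q) < 1 + (1 / 2) * (Real.sqrt Real.pi / Real.Gamma ((q + 1) / 2)) ^ (2 / q) := by
  set y := (Gamma ((q + 1) / 2) / √π) ^ (2 / q) with hy
  have hq0 : 0 < q := by linarith
  have hGpos : 0 < Gamma ((q + 1) / 2) / √π :=
    div_pos (Gamma_pos_of_pos (by linarith)) (by positivity)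
  have hy0 : 0 < y := by positivity
  have hBq2 : 1 / Bq ^ 2 = 1 / 2 * y⁻¹ := by
    rw [hBq, mul_pow, sq_sqrt zero_le_two, ← rpow_natCast, ← rpow_mul hGpos.le]
    field_simp
    norm_num [hy]
  have hinv : (√π / Gamma ((q + 1) / 2)) ^ (2 / q) = y⁻¹ := by
    rw [← inv_div, inv_rpow hGpos.le]
  have hbern : (2 : ℝ) ^ (2 / q) < 1 + 2 / q :=
    two_rpow_lt_one_add (by positivity) ((div_lt_one hq0).2 hq)
  have hkey : 2 / q ≤ 1 / 2 * y⁻¹ := by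
    calc 2 / q = 1 / 2 * (q / 4)⁻¹ := by field_simp; norm_num
      _ ≤ 1 / 2 * y⁻¹ := by gcongr; exact Gamma_div_sqrt_pi_rpow_le hq.le
  rw [hBq2, hinv]
  exact ⟨by linarith, by linarith⟩
end

section
/- Let E be a Banach space with a 1-unconditional finite dimensional decomposition with associated projections (π_m), let J = (m_j) be an increasing sequence of positive integers, σ_j = π_{m_j} − π_{m_{j−1}}, and let D_J(ⁿE) = { P ∈ P(ⁿE) : P(x) = Σ_j P(σ_j x) for all x } be the block diagonal n-homogeneous polynomials. If the subspace D_{J,w}(ⁿE) of weakly-continuous-on-bounded-sets block diagonal polynomials is an M-summand in D_J(ⁿE), then D_{J,w}(ⁿE) = D_J(ⁿE). -/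
/-!
Split `P = y + z` with `y` weakly continuous on bounded sets and `z ∈ S`. The truncations
`Q_N = z ∘ π_{m_N}` are again block diagonal, factor through the finite-dimensional range of
`π_{m_N}` (so they are weakly continuous on bounded sets), and satisfy `‖Q_N‖ ≤ ‖z‖` because a
1-unconditional FDD has contractive projections. The M-summand identity then gives
`|Q_N x + z x| ≤ max ‖Q_N‖ ‖z‖ ≤ ‖z‖`, and `Q_N x → z x`, so `2 |z x| ≤ ‖z‖` on the unit ball:
hence `z = 0` and `P = y`.
-/

open Filter Topology

universe u v

section PolyDefs

variable {E : Type u} [NormedAddCommGroup E] [NormedSpace ℝ E]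

/-- `P` is a continuous `n`-homogeneous scalar polynomial on `E`. -/
def IsHomogPoly (n : ℕ) (P : E → ℝ) : Prop :=
  ∃ M : ContinuousMultilinearMap ℝ (fun _ : Fin n => E) ℝ, ∀ x, P x = M (fun _ => x)

/-- The polynomial (sup) norm: `‖P‖ = sup_{‖x‖ ≤ 1} |P x|`. -/
noncomputable def polyNorm (P : E → ℝ) : ℝ :=
  sSup {r : ℝ | ∃ x : E, ‖x‖ ≤ 1 ∧ r = |P x|}

/-- A net is (norm) bounded. -/
def BoundedNet {ι : Type v} (x : ι → E) : Prop := ∃ C : ℝ, ∀ i, ‖x i‖ ≤ C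

/-- The net `x` converges weakly to `x₀` along the filter `l`. -/
def WeaklyTendsto {ι : Type v} (x : ι → E) (l : Filter ι) (x₀ : E) : Prop :=
  ∀ γ : E →L[ℝ] ℝ, Tendsto (fun i => γ (x i)) l (𝓝 (γ x₀))

/-- `P` is weakly continuous on bounded sets at the point `x₀`. -/
def WCBat (P : E → ℝ) (x₀ : E) : Prop :=
  ∀ (ι : Type u) (l : Filter ι), l.NeBot → ∀ x : ι → E,
    BoundedNet x → WeaklyTendsto x l x₀ → Tendsto (fun i => P (x i)) l (𝓝 (P x₀))

/-- `P ∈ P_w(ⁿE)`: continuous `n`-homogeneous and weakly continuous on bounded sets. -/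
def WCB (n : ℕ) (P : E → ℝ) : Prop := IsHomogPoly n P ∧ ∀ x₀ : E, WCBat P x₀

/-- `P ∈ P_{w0}(ⁿE)`: weakly continuous on bounded sets at `0`. -/
def WCB0 (n : ℕ) (P : E → ℝ) : Prop := IsHomogPoly n P ∧ WCBat P 0

end PolyDefs

open Finset

section WeakContinuity

variable {E F : Type*} [NormedAddCommGroup E] [NormedSpace ℝ E] [NormedAddCommGroup F]
  [NormedSpace ℝ F]

theorem WeaklyTendsto.map_of_finiteDimensional_range {ι : Type*} {x : ι → E} {l : Filter ι}
    {x₀ : E} (hx : WeaklyTendsto x l x₀) (T : E →L[ℝ] F)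
    [FiniteDimensional ℝ (LinearMap.range (T : E →ₗ[ℝ] F))] :
    Tendsto (fun i => T (x i)) l (𝓝 (T x₀)) := by
  set V := LinearMap.range (T : E →ₗ[ℝ] F)
  let Tc : E →L[ℝ] V := T.codRestrict V fun y => LinearMap.mem_range_self _ y
  let e := (Module.finBasis ℝ V).equivFunL
  have hcoord : Tendsto (fun i => e (Tc (x i))) l (𝓝 (e (Tc x₀))) :=
    tendsto_pi_nhds.2 fun k =>
      hx ((ContinuousLinearMap.proj k : (_ → ℝ) →L[ℝ] ℝ).comp (e.toContinuousLinearMap.comp Tc))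
  have hV : Tendsto (fun i => Tc (x i)) l (𝓝 (Tc x₀)) := by
    simpa [Function.comp_def] using (e.symm.continuous.tendsto _).comp hcoord
  exact (continuous_subtype_val.tendsto _).comp hV

end WeakContinuity

section Polynomials

variable {E : Type u} [NormedAddCommGroup E] {n : ℕ} {P : E → ℝ}

theorem polyNorm_le {C : ℝ} (h : ∀ x : E, ‖x‖ ≤ 1 → |P x| ≤ C) : polyNorm P ≤ C :=
  csSup_le ⟨|P 0|, 0, by simp, rfl⟩ (by rintro r ⟨x, hx, rfl⟩; exact h x hx)

variable [NormedSpace ℝ E]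

namespace IsHomogPoly

theorem continuous (hP : IsHomogPoly n P) : Continuous P := by
  obtain ⟨M, hM⟩ := hP
  rw [funext hM]
  exact M.cont.comp (continuous_pi fun _ => continuous_id)

theorem map_smul (hP : IsHomogPoly n P) (c : ℝ) (x : E) : P (c • x) = c ^ n * P x := by
  obtain ⟨M, hM⟩ := hP
  rw [hM, hM]
  simpa using M.map_smul_univ (fun _ => c) (fun _ => x)

theorem comp (hP : IsHomogPoly n P) (T : E →L[ℝ] E) : IsHomogPoly n (fun x => P (T x)) := by
  obtain ⟨M, hM⟩ := hP
  exact ⟨M.compContinuousLinearMap fun _ => T, fun x => hM (T x)⟩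

theorem add {Q : E → ℝ} (hP : IsHomogPoly n P) (hQ : IsHomogPoly n Q) :
    IsHomogPoly n (fun x => P x + Q x) := by
  obtain ⟨M, hM⟩ := hP
  obtain ⟨M', hM'⟩ := hQ
  exact ⟨M + M', fun x => by simp [hM, hM']⟩

theorem bddAbove_polyNorm_set (hP : IsHomogPoly n P) :
    BddAbove {r : ℝ | ∃ x : E, ‖x‖ ≤ 1 ∧ r = |P x|} := by
  obtain ⟨M, hM⟩ := hP
  refine ⟨‖M‖, ?_⟩
  rintro r ⟨x, hx, rfl⟩
  calc |P x| = ‖M fun _ => x‖ := by rw [hM, Real.norm_eq_abs]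
    _ ≤ ‖M‖ * ‖x‖ ^ n := by simpa using M.le_opNorm fun _ => x
    _ ≤ ‖M‖ := mul_le_of_le_one_right (norm_nonneg M) (pow_le_one₀ (norm_nonneg x) hx)

theorem abs_le_polyNorm (hP : IsHomogPoly n P) {x : E} (hx : ‖x‖ ≤ 1) : |P x| ≤ polyNorm P :=
  le_csSup hP.bddAbove_polyNorm_set ⟨x, hx, rfl⟩

theorem abs_le_polyNorm_mul_pow (hP : IsHomogPoly n P) (x : E) :
    |P x| ≤ polyNorm P * ‖x‖ ^ n := by
  rcases eq_or_ne x 0 with rfl | hx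
  · have h0 := hP.map_smul 0 0
    rw [zero_smul] at h0
    rw [norm_zero, h0, abs_mul, abs_pow, abs_zero, mul_comm]
    exact mul_le_mul_of_nonneg_right (hP.abs_le_polyNorm (by simp)) (by positivity)
  · have hx' : ‖x‖ ≠ 0 := norm_ne_zero_iff.2 hx
    have h := hP.map_smul ‖x‖ (‖x‖⁻¹ • x)
    rw [smul_inv_smul₀ hx'] at h
    rw [h, abs_mul, abs_pow, abs_norm, mul_comm]
    gcongr
    exact hP.abs_le_polyNorm (by rw [norm_smul, norm_inv, norm_norm, inv_mul_cancel₀ hx'])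

theorem eq_zero_of_two_mul_abs_le_polyNorm (hP : IsHomogPoly n P)
    (h : ∀ x : E, ‖x‖ ≤ 1 → 2 * |P x| ≤ polyNorm P) : P = 0 := by
  have hnorm : polyNorm P ≤ 0 := by
    have := polyNorm_le fun x hx => (le_div_iff₀' two_pos).2 (h x hx)
    linarith
  funext x
  exact abs_nonpos_iff.1 <| (hP.abs_le_polyNorm_mul_pow x).trans
    (mul_nonpos_of_nonpos_of_nonneg hnorm (by positivity))

theorem polyNorm_comp_le (hP : IsHomogPoly n P) {T : E → E} (hT : ∀ x, ‖T x‖ ≤ ‖x‖) :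
    polyNorm (fun x => P (T x)) ≤ polyNorm P :=
  polyNorm_le fun x hx => hP.abs_le_polyNorm ((hT x).trans hx)

theorem wcb_comp_of_finiteDimensional_range (hP : IsHomogPoly n P) (T : E →L[ℝ] E)
    [FiniteDimensional ℝ (LinearMap.range (T : E →ₗ[ℝ] E))] : WCB n (fun x => P (T x)) :=
  ⟨hP.comp T, fun _ _ _ _ _ _ hx =>
    (hP.continuous.tendsto _).comp (hx.map_of_finiteDimensional_range T)⟩

end IsHomogPoly

theorem abs_le_of_tendsto_of_polyNorm_le {ι : Type*} {l : Filter ι} [l.NeBot] {Q : ι → E → ℝ}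
    (hQ : ∀ i, IsHomogPoly n (Q i)) {C : ℝ} (hC : ∀ i, polyNorm (Q i) ≤ C) {x : E}
    (hx : ‖x‖ ≤ 1) {a : ℝ} (hlim : Tendsto (fun i => Q i x) l (𝓝 a)) : |a| ≤ C :=
  le_of_tendsto hlim.abs (Eventually.of_forall fun i => ((hQ i).abs_le_polyNorm hx).trans (hC i))

end Polynomials

section BlockProjections

variable {E : Type*} [NormedAddCommGroup E] [NormedSpace ℝ E] {p : ℕ → E →L[ℝ] E}
  {σ : ℕ → E → E}

theorem sigma_blockProj_comm (hp : ∀ a b x, p a (p b x) = p (min a b) x)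
    (hσ : ∀ j x, σ j x = p (j + 1) x - p j x) (j N : ℕ) (x : E) :
    σ j (p N x) = p N (σ j x) := by
  rw [hσ, hσ, map_sub, hp, hp, hp, hp, min_comm N, min_comm N]

theorem sigma_blockProj_of_lt (hp : ∀ a b x, p a (p b x) = p (min a b) x)
    (hσ : ∀ j x, σ j x = p (j + 1) x - p j x) {j N : ℕ} (h : j < N) (x : E) :
    σ j (p N x) = σ j x := by
  rw [hσ, hσ, hp, hp, min_eq_left h, min_eq_left h.le]

theorem sigma_blockProj_of_le (hp : ∀ a b x, p a (p b x) = p (min a b) x)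
    (hσ : ∀ j x, σ j x = p (j + 1) x - p j x) {j N : ℕ} (h : N ≤ j) (x : E) :
    σ j (p N x) = 0 := by
  rw [hσ, hp, hp, min_eq_right (h.trans j.le_succ), min_eq_right h, sub_self]

theorem sum_range_sigma (hp0 : p 0 = 0) (hσ : ∀ j x, σ j x = p (j + 1) x - p j x) (K : ℕ)
    (x : E) : ∑ j ∈ range K, σ j x = p K x := by
  simp only [hσ]
  rw [sum_range_sub (fun j => p j x), hp0, zero_apply, sub_zero]

theorem sum_range_sign_smul_sigma (hp0 : p 0 = 0) (hσ : ∀ j x, σ j x = p (j + 1) x - p j x)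
    {N K : ℕ} (hNK : N ≤ K) (x : E) :
    ∑ j ∈ range K, (if j < N then (1 : ℝ) else -1) • σ j x = (2 : ℝ) • p N x - p K x := by
  have hlo : ∀ j ∈ range N, (if j < N then (1 : ℝ) else -1) • σ j x = σ j x := fun j hj => by
    simp [mem_range.1 hj]
  have hhi : ∀ j ∈ Ico N K, (if j < N then (1 : ℝ) else -1) • σ j x = -σ j x := fun j hj => by
    simp [(mem_Ico.1 hj).1.not_gt]
  rw [← sum_range_sigma hp0 hσ N, ← sum_range_sigma hp0 hσ K, ← sum_range_add_sum_Ico _ hNK,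
    ← sum_range_add_sum_Ico _ hNK, sum_congr rfl hlo, sum_congr rfl hhi, sum_neg_distrib]
  module

theorem norm_blockProj_le_of_le (hp : ∀ a b x, p a (p b x) = p (min a b) x) (hp0 : p 0 = 0)
    (hσ : ∀ j x, σ j x = p (j + 1) x - p j x)
    (huncond : ∀ ε : ℕ → ℝ, (∀ j, ε j = 1 ∨ ε j = -1) →
      ∀ (x s : E), HasSum (fun j => ε j • σ j x) s → ‖s‖ = ‖x‖)
    {N K : ℕ} (hNK : N ≤ K) (x : E) : ‖p N x‖ ≤ ‖p K x‖ := by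
  set ε : ℕ → ℝ := fun j => if j < N then 1 else -1
  have hsupp : ∀ j ∉ range K, ε j • σ j (p K x) = 0 := fun j hj => by
    rw [sigma_blockProj_of_le hp hσ (not_lt.1 (mem_range.not.1 hj)), smul_zero]
  have hsum : ∑ j ∈ range K, ε j • σ j (p K x) = (2 : ℝ) • p N x - p K x := by
    rw [← sum_range_sign_smul_sigma hp0 hσ hNK x]
    exact sum_congr rfl fun j hj => by rw [sigma_blockProj_of_lt hp hσ (mem_range.1 hj)]
  have hnorm := huncond ε (fun j => by by_cases h : j < N <;> simp [ε, h]) (p K x) _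
    (hsum ▸ hasSum_sum_of_ne_finset_zero hsupp)
  have htri := norm_le_norm_add_norm_sub' ((2 : ℝ) • p N x) (p K x)
  rw [hnorm, norm_smul, Real.norm_two] at htri
  linarith

theorem norm_blockProj_le (hp : ∀ a b x, p a (p b x) = p (min a b) x) (hp0 : p 0 = 0)
    (hσ : ∀ j x, σ j x = p (j + 1) x - p j x)
    (htend : ∀ x, Tendsto (fun K => p K x) atTop (𝓝 x))
    (huncond : ∀ ε : ℕ → ℝ, (∀ j, ε j = 1 ∨ ε j = -1) →
      ∀ (x s : E), HasSum (fun j => ε j • σ j x) s → ‖s‖ = ‖x‖)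
    (N : ℕ) (x : E) : ‖p N x‖ ≤ ‖x‖ :=
  ge_of_tendsto (htend x).norm <| (eventually_ge_atTop N).mono fun _ hK =>
    norm_blockProj_le_of_le hp hp0 hσ huncond hK x

end BlockProjections

/-- If the weakly continuous block diagonal polynomials form an M-summand in the block
diagonal polynomials `D_J(ⁿE)` (for a 1-unconditional FDD), they are all of `D_J(ⁿE)`. -/
theorem stmt17 {E : Type u} [NormedAddCommGroup E] [NormedSpace ℝ E] (n : ℕ)
    (π : ℕ → E →L[ℝ] E)
    (hfin : ∀ k, FiniteDimensional ℝ (LinearMap.range (π k : E →ₗ[ℝ] E)))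
    (hcomm : ∀ j k : ℕ, j ≤ k → ∀ x, π j (π k x) = π j x ∧ π k (π j x) = π j x)
    (htend : ∀ x : E, Tendsto (fun k => π k x) atTop (𝓝 x))
    (m : ℕ → ℕ) (hm : StrictMono m) (hm0 : π (m 0) = 0)
    (σf : ℕ → E → E) (hσ : ∀ j x, σf j x = π (m (j + 1)) x - π (m j) x)
    (huncond : ∀ ε : ℕ → ℝ, (∀ j, ε j = 1 ∨ ε j = -1) →
      ∀ (x s : E), HasSum (fun j => ε j • σf j x) s → ‖s‖ = ‖x‖)
    (DJ : Set (E → ℝ))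
    (hDJ : DJ = {P : E → ℝ | IsHomogPoly n P ∧ ∀ x, HasSum (fun j => P (σf j x)) (P x)})
    (h : ∃ S ⊆ DJ,
      (∀ P ∈ S, ∀ Q ∈ S, (fun x => P x + Q x) ∈ S) ∧
      (∀ c : ℝ, ∀ P ∈ S, (fun x => c * P x) ∈ S) ∧
      (∀ P ∈ DJ, ∃! yz : (E → ℝ) × (E → ℝ),
        (yz.1 ∈ DJ ∧ WCB n yz.1) ∧ yz.2 ∈ S ∧ P = fun x => yz.1 x + yz.2 x) ∧
      (∀ y ∈ DJ, WCB n y → ∀ z ∈ S,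
        polyNorm (fun x => y x + z x) = max (polyNorm y) (polyNorm z))) :
    ∀ P ∈ DJ, WCB n P := by
  intro P hP
  obtain ⟨S, hSDJ, -, -, hdecomp, hmax⟩ := h
  obtain ⟨⟨y, z⟩, ⟨⟨-, hyW⟩, hzS, rfl⟩, -⟩ := hdecomp P hP
  obtain ⟨hz, hzσ⟩ : IsHomogPoly n z ∧ ∀ x, HasSum (fun j => z (σf j x)) (z x) := by
    have := hSDJ hzS
    rwa [hDJ] at this
  let p : ℕ → E →L[ℝ] E := fun N => π (m N)
  have hp : ∀ a b x, p a (p b x) = p (min a b) x := fun a b x => by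
    rcases le_total a b with hab | hab
    · rw [min_eq_left hab]; exact (hcomm _ _ (hm.monotone hab) x).1
    · rw [min_eq_right hab]; exact (hcomm _ _ (hm.monotone hab) x).2
  have hptend : ∀ x, Tendsto (fun K => p K x) atTop (𝓝 x) := fun x =>
    (htend x).comp hm.tendsto_atTop
  have hQ : ∀ N, (fun x => z (p N x)) ∈ DJ ∧ WCB n (fun x => z (p N x)) := fun N =>
    ⟨hDJ ▸ ⟨hz.comp _, fun x => by simpa only [sigma_blockProj_comm hp hσ] using hzσ (p N x)⟩,
      haveI := hfin (m N); hz.wcb_comp_of_finiteDimensional_range (p N)⟩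
  have hz0 : z = 0 := hz.eq_zero_of_two_mul_abs_le_polyNorm fun x hx => by
    have hlim : Tendsto (fun N => z (p N x) + z x) atTop (𝓝 (z x + z x)) :=
      ((hz.continuous.tendsto x).comp (hptend x)).add_const _
    have hnorm : ∀ N, polyNorm (fun y => z (p N y) + z y) ≤ polyNorm z := fun N =>
      (hmax _ (hQ N).1 (hQ N).2 z hzS).trans_le <| max_le
        (hz.polyNorm_comp_le (norm_blockProj_le hp hm0 hσ hptend huncond N)) le_rfl
    simpa [← two_mul, abs_mul] using
      abs_le_of_tendsto_of_polyNorm_le (fun N => (hz.comp (p N)).add hz) hnorm hx hlim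
  simpa [hz0] using hyW
end
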